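/- Let 1 ≤ r ≤ n and let w₁, …, w_r ∈ ℝⁿ be fixed vectors. Define the r-ary bracket {f₁, …, f_r}(x) := det[Df_i(x)(w_j)], the determinant of the r×r matrix whose (i,j) entry is the Fréchet derivative of f_i at x applied to w_j. Then this bracket satisfies the Fundamental Identity of degree r: for all smooth functions f₁, …, f_{r−1}, g₁, …, g_r : ℝⁿ → ℝ and all x ∈ ℝⁿ, {f₁, …, f_{r−1}, {g₁, …, g_r}}(x) = Σ_{i=1}^{r} {g₁, …, g_{i−1}, {f₁, …, f_{r−1}, gᵢ}, g_{i+1}, …, g_r}(x). (Every constant decomposable r-vector field w₁∧…∧w_r on ℝⁿ defines a Nambu structure; in particular the canonical form ∂/∂x¹∧…∧∂/∂x^r of Proposition 2 is a Nambu structure.) -/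

import Mathlib

/-- The `r`-ary bracket on `ℝⁿ = Fin n → ℝ` determined by fixed vectors
`w₁, …, w_r ∈ ℝⁿ`: `{f₁, …, f_r}(x) = det [Dfᵢ(x)(wⱼ)]`. -/
noncomputable def constBracket (n r : ℕ) (w : Fin r → (Fin n → ℝ))
    (f : Fin r → ((Fin n → ℝ) → ℝ)) (x : Fin n → ℝ) : ℝ :=
  (Matrix.of fun i j => fderiv ℝ (f i) x (w j)).det

open Matrix

section Aux

noncomputable def detCM (r : ℕ) : ContinuousMultilinearMap ℝ (fun _ : Fin r => (Fin r → ℝ)) ℝ :=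
  MultilinearMap.mkContinuous
    (Matrix.detRowAlternating : (Fin r → ℝ) [⋀^Fin r]→ₗ[ℝ] ℝ).toMultilinearMap
    (r.factorial : ℝ) (fun v => by
      show ‖(Matrix.of v).det‖ ≤ _
      rw [Matrix.det_apply']
      calc ‖∑ σ : Equiv.Perm (Fin r), Equiv.Perm.sign σ * ∏ i, Matrix.of v (σ i) i‖
          ≤ ∑ σ : Equiv.Perm (Fin r), ‖(Equiv.Perm.sign σ : ℝ) * ∏ i, v (σ i) i‖ :=
            norm_sum_le _ _
        _ ≤ ∑ σ : Equiv.Perm (Fin r), ∏ i, ‖v i‖ := by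
            refine Finset.sum_le_sum fun σ _ => ?_
            rw [norm_mul]
            have hs : ‖(Equiv.Perm.sign σ : ℝ)‖ = 1 := by
              rcases Int.units_eq_one_or (Equiv.Perm.sign σ) with h | h <;> simp [h]
            rw [hs, one_mul]
            calc ‖∏ i, v (σ i) i‖ ≤ ∏ i, ‖v (σ i)‖ := by
                  rw [norm_prod]
                  exact Finset.prod_le_prod (fun _ _ => norm_nonneg _)
                    (fun i _ => norm_le_pi_norm (v (σ i)) i)
              _ = ∏ i, ‖v i‖ := Equiv.prod_comp σ (fun i => ‖v i‖)
        _ = (r.factorial : ℝ) * ∏ i, ‖v i‖ := by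
            rw [Finset.sum_const, Finset.card_univ, Fintype.card_perm, Fintype.card_fin,
              nsmul_eq_mul]
      )
lemma detCM_apply (r : ℕ) (v : Fin r → Fin r → ℝ) : detCM r v = (Matrix.of v).det := by
  simp [detCM]; rfl

theorem fderiv_constBracket (n r : ℕ) (w : Fin r → Fin n → ℝ)
    (g : Fin r → ((Fin n → ℝ) → ℝ)) (hg : ∀ i, ContDiff ℝ (⊤ : ℕ∞) (g i)) (x v : Fin n → ℝ) :
    fderiv ℝ (constBracket n r w g) x v =
      ∑ i, ((Matrix.of fun i' j => fderiv ℝ (g i') x (w j)).updateRow i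
        (fun k => fderiv ℝ (fderiv ℝ (g i)) x v (w k))).det := by
  classical
  set G : Fin r → (Fin n → ℝ) → (Fin r → ℝ) := fun i y j => fderiv ℝ (g i) y (w j) with hG
  set G' : Fin r → ((Fin n → ℝ) →L[ℝ] (Fin r → ℝ)) := fun i =>
    ContinuousLinearMap.pi (fun j =>
      (ContinuousLinearMap.apply ℝ ℝ (w j)).comp (fderiv ℝ (fderiv ℝ (g i)) x)) with hG'
  have hGd : ∀ i, HasFDerivAt (G i) (G' i) x := by
    intro i
    rw [hasFDerivAt_pi']
    intro j
    rw [hG']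
    simp only [ContinuousLinearMap.proj_pi]
    have h2 : HasFDerivAt (fderiv ℝ (g i)) (fderiv ℝ (fderiv ℝ (g i)) x) x :=
      (((hg i).fderiv_right (m := 1) ((by exact WithTop.coe_le_coe.mpr le_top))).differentiable one_ne_zero).differentiableAt.hasFDerivAt
    exact ((ContinuousLinearMap.apply ℝ ℝ (w j)).hasFDerivAt).comp x h2
  have hcomp := HasFDerivAt.multilinear_comp (detCM r) hGd
  have hfun : (fun y => (detCM r) fun i => G i y) = constBracket n r w g := by
    funext y
    rw [detCM_apply]
    rfl
  rw [hfun] at hcomp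
  rw [hcomp.fderiv]
  rw [ContinuousLinearMap.sum_apply]
  refine Finset.sum_congr rfl fun i _ => ?_
  rw [ContinuousLinearMap.comp_apply]
  have happ : ∀ (z : Fin r → ℝ),
      ((detCM r).toContinuousLinearMap (fun j => G j x) i) z
        = detCM r (Function.update (fun j => G j x) i z) := fun z => rfl
  rw [happ, detCM_apply]
  rw [Matrix.updateRow]
  congr 1


lemma det_updateRow_fsum {r : ℕ} (M : Matrix (Fin r) (Fin r) ℝ) (i : Fin r)
    {κ : Type*} [DecidableEq κ] (t : Finset κ) (v : κ → Fin r → ℝ) :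
    (M.updateRow i (∑ k ∈ t, v k)).det = ∑ k ∈ t, (M.updateRow i (v k)).det := by
  classical
  induction t using Finset.cons_induction with
  | empty =>
      rw [Finset.sum_empty, Finset.sum_empty]
      exact Matrix.det_eq_zero_of_row_eq_zero i (fun j => by simp)
  | cons k t hk ih =>
      rw [Finset.sum_cons, Finset.sum_cons, Matrix.det_updateRow_add, ih]

lemma det_updateRow_expand {r : ℕ} (M : Matrix (Fin r) (Fin r) ℝ) (i : Fin r) (v : Fin r → ℝ) :
    (M.updateRow i v).det = ∑ k, v k * (M.updateRow i (Pi.single k 1)).det := by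
  set u : Fin r → Fin r → ℝ := fun k => v k • (Pi.single k 1 : Fin r → ℝ) with hu
  have hv : v = ∑ k, u k := by
    funext j
    simp [hu, Finset.sum_apply, Pi.single_apply]
  calc (M.updateRow i v).det = (M.updateRow i (∑ k, u k)).det := by rw [← hv]
    _ = ∑ k, (M.updateRow i (u k)).det := det_updateRow_fsum M i Finset.univ u
    _ = ∑ k, v k * (M.updateRow i (Pi.single k 1)).det := by
        simp [hu, Matrix.det_updateRow_smul]

lemma sum_det_updateRow_trace {r : ℕ} (b : Matrix (Fin r) (Fin r) ℝ) (d : Fin r → Fin r → ℝ) :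
    ∑ i, (b.updateRow i (fun j => ∑ k, b i k * d j k)).det = (∑ j, d j j) * b.det := by
  have h1 : ∀ i : Fin r, (b.updateRow i (fun j => ∑ k, b i k * d j k)).det
      = ∑ j, ∑ k, d j k * (b.adjugate j i * b i k) := by
    intro i
    rw [det_updateRow_expand]
    refine Finset.sum_congr rfl fun j _ => ?_
    rw [Finset.sum_mul, ← Matrix.adjugate_apply]
    refine Finset.sum_congr rfl fun k _ => by ring
  simp only [h1]
  rw [Finset.sum_comm]
  have h2 : ∀ j : Fin r, ∑ i, ∑ k, d j k * (b.adjugate j i * b i k) = d j j * b.det := by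
    intro j
    rw [Finset.sum_comm]
    have h3 : ∀ k, ∑ i, d j k * (b.adjugate j i * b i k) = d j k * (b.adjugate * b) j k := by
      intro k
      rw [Matrix.mul_apply, Finset.mul_sum]
    simp only [h3, Matrix.adjugate_mul]
    simp [Matrix.one_apply, Finset.sum_ite_eq]
  simp only [h2]
  rw [Finset.sum_mul]

variable {m : ℕ}

lemma snoc_updateRow_last (a : Fin m → Fin (m+1) → ℝ) (u v : Fin (m+1) → ℝ) :
    (Matrix.of (Fin.snoc a u) : Matrix (Fin (m+1)) (Fin (m+1)) ℝ).updateRow (Fin.last m) v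
      = Matrix.of (Fin.snoc a v) := by
  funext i j
  refine Fin.lastCases ?_ (fun p => ?_) i
  · simp
  · simp [Matrix.updateRow_apply, (Fin.castSucc_lt_last p).ne]

lemma snoc_updateRow_castSucc (a : Fin m → Fin (m+1) → ℝ) (v : Fin (m+1) → ℝ) (s : Fin m)
    (u : Fin (m+1) → ℝ) :
    (Matrix.of (Fin.snoc a v) : Matrix (Fin (m+1)) (Fin (m+1)) ℝ).updateRow (Fin.castSucc s) u
      = Matrix.of (Fin.snoc (Function.update a s u) v) := by
  funext i j
  refine Fin.lastCases ?_ (fun p => ?_) i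
  · simp [Matrix.updateRow_apply, (Fin.castSucc_lt_last s).ne']
  · by_cases hp : p = s
    · subst hp; simp
    · simp [Matrix.updateRow_apply, hp, Fin.castSucc_inj, Function.update_apply]

lemma det_snoc_swap (a : Fin m → Fin (m+1) → ℝ) (s : Fin m) (u v : Fin (m+1) → ℝ) :
    (Matrix.of (Fin.snoc (Function.update a s u) v) : Matrix (Fin (m+1)) (Fin (m+1)) ℝ).det
      = -(Matrix.of (Fin.snoc (Function.update a s v) u) : Matrix (Fin (m+1)) (Fin (m+1)) ℝ).det := by
  set σ : Equiv.Perm (Fin (m+1)) := Equiv.swap (Fin.castSucc s) (Fin.last m) with hσ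
  have h : (Matrix.of (Fin.snoc (Function.update a s u) v) : Matrix (Fin (m+1)) (Fin (m+1)) ℝ)
      = ((Matrix.of (Fin.snoc (Function.update a s v) u)
          : Matrix (Fin (m+1)) (Fin (m+1)) ℝ).submatrix σ id) := by
    funext i j
    rw [Matrix.submatrix_apply, id]
    refine Fin.lastCases ?_ (fun p => ?_) i
    · rw [hσ]
      rw [Equiv.swap_apply_right]
      simp [Function.update_apply, Fin.snoc_last, Fin.snoc_castSucc,
        (Fin.castSucc_lt_last s).ne, (Fin.castSucc_lt_last s).ne']
    · by_cases hp : p = s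
      · subst hp
        rw [hσ, Equiv.swap_apply_left]
        simp only [Matrix.of_apply, Fin.snoc_castSucc, Fin.snoc_last,
          Function.update_self]
      · have h1 : σ (Fin.castSucc p) = Fin.castSucc p := by
          rw [hσ]
          refine Equiv.swap_apply_of_ne_of_ne ?_ ?_
          · simpa [Fin.castSucc_inj] using hp
          · exact (Fin.castSucc_lt_last p).ne
        rw [h1]
        simp [Function.update_apply, hp]
  rw [h, Matrix.det_permute]
  have hsign : Equiv.Perm.sign σ = -1 := by
    rw [hσ]
    exact Equiv.Perm.sign_swap (Fin.castSucc_lt_last s).ne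
  rw [hsign]
  simp

lemma key_alg (m : ℕ) (a : Fin m → Fin (m+1) → ℝ) (b : Fin (m+1) → Fin (m+1) → ℝ)
    (A : Fin m → Fin (m+1) → Fin (m+1) → ℝ) (B : Fin (m+1) → Fin (m+1) → Fin (m+1) → ℝ)
    (hA : ∀ s j k, A s j k = A s k j) (hB : ∀ i j k, B i j k = B i k j) :
    (Matrix.of (Fin.snoc a (fun j => ∑ i, ((Matrix.of b).updateRow i (B i j)).det))
      : Matrix (Fin (m+1)) (Fin (m+1)) ℝ).det
    = ∑ i, ((Matrix.of b).updateRow i (fun j =>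
        (∑ s, ((Matrix.of (Fin.snoc a (b i)) : Matrix (Fin (m+1)) (Fin (m+1)) ℝ).updateRow
            (Fin.castSucc s) (A s j)).det)
        + ((Matrix.of (Fin.snoc a (b i)) : Matrix (Fin (m+1)) (Fin (m+1)) ℝ).updateRow
            (Fin.last m) (B i j)).det)).det := by
  classical
  -- Step A : the `B`-part, term by term
  have stepA : ∀ i, (Matrix.of (Fin.snoc a (fun j => ((Matrix.of b).updateRow i (B i j)).det))
        : Matrix (Fin (m+1)) (Fin (m+1)) ℝ).det
      = ((Matrix.of b).updateRow i (fun j =>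
          (Matrix.of (Fin.snoc a (B i j)) : Matrix (Fin (m+1)) (Fin (m+1)) ℝ).det)).det := by
    intro i
    have hL : (fun j => ((Matrix.of b).updateRow i (B i j)).det)
        = ∑ k, (fun j : Fin (m+1) =>
            ((Matrix.of b).updateRow i (Pi.single k 1)).det • B i k j) := by
      funext j
      rw [Finset.sum_apply]
      rw [det_updateRow_expand]
      refine Finset.sum_congr rfl fun k _ => ?_
      rw [smul_eq_mul, hB i j k]
      ring
    rw [← snoc_updateRow_last a 0 (fun j => ((Matrix.of b).updateRow i (B i j)).det)]
    rw [hL, det_updateRow_fsum]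
    have hR : ((Matrix.of b).updateRow i (fun j =>
        (Matrix.of (Fin.snoc a (B i j)) : Matrix (Fin (m+1)) (Fin (m+1)) ℝ).det)).det
        = ∑ k, (Matrix.of (Fin.snoc a (B i k)) : Matrix (Fin (m+1)) (Fin (m+1)) ℝ).det *
            ((Matrix.of b).updateRow i (Pi.single k 1)).det := det_updateRow_expand _ _ _
    rw [hR]
    refine Finset.sum_congr rfl fun k _ => ?_
    have : (fun j : Fin (m+1) => ((Matrix.of b).updateRow i (Pi.single k 1)).det • B i k j)
        = ((Matrix.of b).updateRow i (Pi.single k 1)).det • B i k := rfl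
    rw [this, Matrix.det_updateRow_smul, snoc_updateRow_last]
    ring
  -- Step B : the `A`-part vanishes
  have stepB : ∀ s : Fin m, ∑ i, ((Matrix.of b).updateRow i (fun j =>
      ((Matrix.of (Fin.snoc a (b i)) : Matrix (Fin (m+1)) (Fin (m+1)) ℝ).updateRow
        (Fin.castSucc s) (A s j)).det)).det = 0 := by
    intro s
    set d : Fin (m+1) → Fin (m+1) → ℝ := fun j k =>
      (Matrix.of (Fin.snoc (Function.update a s (A s j)) (Pi.single k 1))
        : Matrix (Fin (m+1)) (Fin (m+1)) ℝ).det with hd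
    have hrow : ∀ i, (fun j => ((Matrix.of (Fin.snoc a (b i))
          : Matrix (Fin (m+1)) (Fin (m+1)) ℝ).updateRow (Fin.castSucc s) (A s j)).det)
        = fun j => ∑ k, (Matrix.of b : Matrix (Fin (m+1)) (Fin (m+1)) ℝ) i k * d j k := by
      intro i
      funext j
      rw [snoc_updateRow_castSucc]
      rw [← snoc_updateRow_last (Function.update a s (A s j)) 0 (b i)]
      rw [det_updateRow_expand]
      refine Finset.sum_congr rfl fun k _ => ?_
      rw [snoc_updateRow_last]
      simp [hd]
    have htrace := sum_det_updateRow_trace (Matrix.of b) d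
    have hsum : ∑ i, ((Matrix.of b).updateRow i (fun j =>
        ((Matrix.of (Fin.snoc a (b i)) : Matrix (Fin (m+1)) (Fin (m+1)) ℝ).updateRow
          (Fin.castSucc s) (A s j)).det)).det
        = (∑ j, d j j) * (Matrix.of b).det := by
      rw [← htrace]
      refine Finset.sum_congr rfl fun i _ => ?_
      rw [hrow i]
    rw [hsum]
    -- the trace is zero
    set ee : Fin (m+1) → Fin (m+1) → ℝ := fun j l =>
      (Matrix.of (Fin.snoc (Function.update a s (Pi.single l 1)) (Pi.single j 1))
        : Matrix (Fin (m+1)) (Fin (m+1)) ℝ).det with hee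
    have hdjj : ∀ j, d j j = ∑ l, A s j l * ee j l := by
      intro j
      simp only [hd]
      rw [← snoc_updateRow_castSucc a (Pi.single j 1) s (A s j)]
      rw [det_updateRow_expand]
      refine Finset.sum_congr rfl fun l _ => ?_
      rw [snoc_updateRow_castSucc]
    have hanti : ∀ j l, ee j l = -(ee l j) := by
      intro j l
      simp only [hee]
      exact det_snoc_swap a s (Pi.single l 1) (Pi.single j 1)
    have h1 : ∀ j l : Fin (m+1), A s l j * ee l j = -(A s j l * ee j l) := by
      intro j l
      rw [hA s l j, hanti l j]
      ring
    have hS : (∑ j, ∑ l, A s j l * ee j l) = -(∑ j, ∑ l, A s j l * ee j l) := by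
      conv_lhs => rw [Finset.sum_comm]
      calc ∑ l, ∑ j, A s j l * ee j l
          = ∑ j, ∑ l, -(A s j l * ee j l) :=
            Finset.sum_congr rfl fun j _ => Finset.sum_congr rfl fun l _ => h1 j l
        _ = -(∑ j, ∑ l, A s j l * ee j l) := by
            simp [Finset.sum_neg_distrib]
    have hd0 : (∑ j, d j j) = ∑ j, ∑ l, A s j l * ee j l :=
      Finset.sum_congr rfl fun j _ => hdjj j
    have hz : (∑ j, d j j) = 0 := by
      rw [hd0]
      linarith [hS]
    rw [hz, zero_mul]
  -- Assemble
  have hsplit : ∀ i : Fin (m+1),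
      ((Matrix.of b).updateRow i (fun j =>
        (∑ s, ((Matrix.of (Fin.snoc a (b i)) : Matrix (Fin (m+1)) (Fin (m+1)) ℝ).updateRow
            (Fin.castSucc s) (A s j)).det)
        + ((Matrix.of (Fin.snoc a (b i)) : Matrix (Fin (m+1)) (Fin (m+1)) ℝ).updateRow
            (Fin.last m) (B i j)).det)).det
      = ((Matrix.of b).updateRow i (fun j =>
          ∑ s, ((Matrix.of (Fin.snoc a (b i)) : Matrix (Fin (m+1)) (Fin (m+1)) ℝ).updateRow
            (Fin.castSucc s) (A s j)).det)).det
        + ((Matrix.of b).updateRow i (fun j =>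
          ((Matrix.of (Fin.snoc a (b i)) : Matrix (Fin (m+1)) (Fin (m+1)) ℝ).updateRow
            (Fin.last m) (B i j)).det)).det := by
    intro i
    exact Matrix.det_updateRow_add _ _ _ _
  rw [Finset.sum_congr rfl fun i _ => hsplit i]
  rw [Finset.sum_add_distrib]
  -- the A-part
  have hApart : ∑ i, ((Matrix.of b).updateRow i (fun j =>
      ∑ s, ((Matrix.of (Fin.snoc a (b i)) : Matrix (Fin (m+1)) (Fin (m+1)) ℝ).updateRow
        (Fin.castSucc s) (A s j)).det)).det = 0 := by
    have h1 : ∀ i : Fin (m+1), (fun j =>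
        ∑ s, ((Matrix.of (Fin.snoc a (b i)) : Matrix (Fin (m+1)) (Fin (m+1)) ℝ).updateRow
          (Fin.castSucc s) (A s j)).det)
        = ∑ s, (fun j => ((Matrix.of (Fin.snoc a (b i))
            : Matrix (Fin (m+1)) (Fin (m+1)) ℝ).updateRow (Fin.castSucc s) (A s j)).det) := by
      intro i; funext j; rw [Finset.sum_apply]
    calc ∑ i, ((Matrix.of b).updateRow i (fun j =>
        ∑ s, ((Matrix.of (Fin.snoc a (b i)) : Matrix (Fin (m+1)) (Fin (m+1)) ℝ).updateRow
          (Fin.castSucc s) (A s j)).det)).det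
        = ∑ i, ∑ s, ((Matrix.of b).updateRow i (fun j =>
            ((Matrix.of (Fin.snoc a (b i)) : Matrix (Fin (m+1)) (Fin (m+1)) ℝ).updateRow
              (Fin.castSucc s) (A s j)).det)).det := by
          refine Finset.sum_congr rfl fun i _ => ?_
          rw [h1 i, det_updateRow_fsum]
      _ = ∑ s, ∑ i, ((Matrix.of b).updateRow i (fun j =>
            ((Matrix.of (Fin.snoc a (b i)) : Matrix (Fin (m+1)) (Fin (m+1)) ℝ).updateRow
              (Fin.castSucc s) (A s j)).det)).det := Finset.sum_comm
      _ = 0 := by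
          rw [Finset.sum_congr rfl fun s _ => stepB s]
          exact Finset.sum_const_zero
  rw [hApart, zero_add]
  -- the B-part
  have hlast : (fun j => ∑ i, ((Matrix.of b).updateRow i (B i j)).det)
      = ∑ i, (fun j => ((Matrix.of b).updateRow i (B i j)).det) := by
    funext j; rw [Finset.sum_apply]
  rw [← snoc_updateRow_last a 0 (fun j => ∑ i, ((Matrix.of b).updateRow i (B i j)).det)]
  rw [hlast, det_updateRow_fsum]
  refine Finset.sum_congr rfl fun i _ => ?_
  rw [snoc_updateRow_last, stepA i]
  refine congrArg _ ?_
  refine congrArg _ ?_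
  funext j
  rw [snoc_updateRow_last]

end Aux

/-- for `1 ≤ r ≤ n` (here `r = m + 1`) and fixed vectors
`w₁, …, w_r ∈ ℝⁿ`, the bracket `{f₁, …, f_r}(x) = det [Dfᵢ(x)(wⱼ)]` satisfies the
Fundamental Identity of degree `r`: every constant decomposable `r`-vector field
`w₁ ∧ ⋯ ∧ w_r` on `ℝⁿ` defines a Nambu structure. -/
theorem fundamentalIdentity_constant_decomposable (n m : ℕ) (hrn : m + 1 ≤ n)
    (w : Fin (m + 1) → (Fin n → ℝ))
    (f : Fin m → ((Fin n → ℝ) → ℝ))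
    (g : Fin (m + 1) → ((Fin n → ℝ) → ℝ))
    (hf : ∀ i, ContDiff ℝ (⊤ : ℕ∞) (f i)) (hg : ∀ i, ContDiff ℝ (⊤ : ℕ∞) (g i))
    (x : Fin n → ℝ) :
    constBracket n (m + 1) w (Fin.snoc f (constBracket n (m + 1) w g)) x =
      ∑ i : Fin (m + 1),
        constBracket n (m + 1) w
          (Function.update g i (constBracket n (m + 1) w (Fin.snoc f (g i)))) x := by
  classical
  have hAsym : ∀ (s : Fin m) (j k : Fin (m+1)),
      fderiv ℝ (fderiv ℝ (f s)) x (w j) (w k) = fderiv ℝ (fderiv ℝ (f s)) x (w k) (w j) :=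
    fun s j k => ((hf s).contDiffAt.isSymmSndFDerivAt (by simp [minSmoothness_of_isRCLikeNormedField]; exact WithTop.coe_le_coe.mpr le_top)).eq (w j) (w k)
  have hBsym : ∀ (i : Fin (m+1)) (j k : Fin (m+1)),
      fderiv ℝ (fderiv ℝ (g i)) x (w j) (w k) = fderiv ℝ (fderiv ℝ (g i)) x (w k) (w j) :=
    fun i j k => ((hg i).contDiffAt.isSymmSndFDerivAt (by simp [minSmoothness_of_isRCLikeNormedField]; exact WithTop.coe_le_coe.mpr le_top)).eq (w j) (w k)
  have key := key_alg m (fun s j => fderiv ℝ (f s) x (w j)) (fun i j => fderiv ℝ (g i) x (w j))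
      (fun s j k => fderiv ℝ (fderiv ℝ (f s)) x (w j) (w k))
      (fun i j k => fderiv ℝ (fderiv ℝ (g i)) x (w j) (w k)) hAsym hBsym
  have hLmat : (Matrix.of fun i j =>
        fderiv ℝ ((Fin.snoc f (constBracket n (m + 1) w g) : Fin (m+1) → ((Fin n → ℝ) → ℝ)) i) x (w j))
      = Matrix.of (Fin.snoc (fun s j => fderiv ℝ (f s) x (w j)) (fun j => ∑ i,
          ((Matrix.of (fun i j => fderiv ℝ (g i) x (w j))).updateRow i
            ((fun i j k => fderiv ℝ (fderiv ℝ (g i)) x (w j) (w k)) i j)).det)) := by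
    funext i j
    refine Fin.lastCases ?_ (fun s => ?_) i
    · show fderiv ℝ ((Fin.snoc f (constBracket n (m + 1) w g) : Fin (m+1) → ((Fin n → ℝ) → ℝ)) (Fin.last m)) x (w j) = _
      simp only [Matrix.of_apply, Fin.snoc_last]
      exact fderiv_constBracket n (m+1) w g hg x (w j)
    · show fderiv ℝ ((Fin.snoc f (constBracket n (m + 1) w g) : Fin (m+1) → ((Fin n → ℝ) → ℝ)) (Fin.castSucc s)) x (w j) = _
      simp only [Matrix.of_apply, Fin.snoc_castSucc]
  have hRmat : ∀ i : Fin (m+1), (Matrix.of fun l j =>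
        fderiv ℝ (Function.update g i (constBracket n (m + 1) w (Fin.snoc f (g i))) l) x (w j))
      = (Matrix.of (fun i j => fderiv ℝ (g i) x (w j))).updateRow i (fun j =>
          (∑ s, ((Matrix.of (Fin.snoc (fun s j => fderiv ℝ (f s) x (w j))
              (fun j => fderiv ℝ (g i) x (w j)))
              : Matrix (Fin (m+1)) (Fin (m+1)) ℝ).updateRow
            (Fin.castSucc s) ((fun s j k => fderiv ℝ (fderiv ℝ (f s)) x (w j) (w k)) s j)).det)
          + ((Matrix.of (Fin.snoc (fun s j => fderiv ℝ (f s) x (w j))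
              (fun j => fderiv ℝ (g i) x (w j)))
              : Matrix (Fin (m+1)) (Fin (m+1)) ℝ).updateRow
            (Fin.last m) ((fun i j k => fderiv ℝ (fderiv ℝ (g i)) x (w j) (w k)) i j)).det) := by
    intro i
    funext l j
    rw [Matrix.updateRow_apply]
    by_cases hl : l = i
    · subst hl
      rw [if_pos rfl]
      show fderiv ℝ (Function.update g l (constBracket n (m + 1) w (Fin.snoc f (g l))) l) x (w j)
        = _
      rw [Function.update_self]
      have hsm : ∀ p : Fin (m+1), ContDiff ℝ (⊤ : ℕ∞) ((Fin.snoc f (g l) : Fin (m+1) → _) p) := by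
        intro p
        refine Fin.lastCases ?_ (fun s => ?_) p
        · rw [Fin.snoc_last]; exact hg l
        · rw [Fin.snoc_castSucc]; exact hf s
      rw [fderiv_constBracket n (m+1) w _ hsm x (w j)]
      have hmat2 : (Matrix.of fun p q =>
            fderiv ℝ ((Fin.snoc f (g l) : Fin (m+1) → _) p) x (w q))
          = Matrix.of (Fin.snoc (fun s j => fderiv ℝ (f s) x (w j))
              (fun j => fderiv ℝ (g l) x (w j))) := by
        funext p q
        refine Fin.lastCases ?_ (fun s => ?_) p
        · show fderiv ℝ ((Fin.snoc f (g l) : Fin (m+1) → ((Fin n → ℝ) → ℝ)) (Fin.last m)) x (w q) = _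
          simp only [Matrix.of_apply, Fin.snoc_last]
        · show fderiv ℝ ((Fin.snoc f (g l) : Fin (m+1) → ((Fin n → ℝ) → ℝ)) (Fin.castSucc s)) x (w q) = _
          simp only [Matrix.of_apply, Fin.snoc_castSucc]
      rw [hmat2, Fin.sum_univ_castSucc]
      congr 1
      · refine Finset.sum_congr rfl fun s _ => ?_
        congr 1
        funext k
        rw [Fin.snoc_castSucc]
      · congr 1
        funext k
        rw [Fin.snoc_last]
    · rw [if_neg hl]
      show fderiv ℝ (Function.update g i (constBracket n (m + 1) w (Fin.snoc f (g i))) l) x (w j)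
        = fderiv ℝ (g l) x (w j)
      rw [Function.update_of_ne hl]
  calc constBracket n (m + 1) w (Fin.snoc f (constBracket n (m + 1) w g)) x
      = (Matrix.of (Fin.snoc (fun s j => fderiv ℝ (f s) x (w j)) (fun j => ∑ i,
          ((Matrix.of (fun i j => fderiv ℝ (g i) x (w j))).updateRow i
            ((fun i j k => fderiv ℝ (fderiv ℝ (g i)) x (w j) (w k)) i j)).det))
          : Matrix (Fin (m+1)) (Fin (m+1)) ℝ).det := by
        show (Matrix.of fun i j =>
          fderiv ℝ ((Fin.snoc f (constBracket n (m + 1) w g) : Fin (m+1) → ((Fin n → ℝ) → ℝ)) i) x (w j)).det = _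
        rw [hLmat]
    _ = ∑ i : Fin (m + 1),
        constBracket n (m + 1) w
          (Function.update g i (constBracket n (m + 1) w (Fin.snoc f (g i)))) x := by
        rw [key]
        refine Finset.sum_congr rfl fun i _ => ?_
        show _ = (Matrix.of fun l j =>
          fderiv ℝ (Function.update g i (constBracket n (m + 1) w (Fin.snoc f (g i))) l) x
            (w j)).det
        rw [hRmat i]
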